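/- On a nearly cosymplectic manifold, θ(∇_X ξ) = -∇_{θX} ξ for every tangent vector X. -/

import Mathlib

/-- Abstract algebraic model of a nearly cosymplectic (almost contact metric)
manifold: `A` plays the role of the algebra of smooth functions, `V` of the
module of vector fields, `D` of the directional derivative, `g` of the metric,
`nabla` of the Levi-Civita connection, `θ` of the structure tensor and `ξ` of
the characteristic (Reeb) unit vector field, with `η X = g X ξ`. -/
structure NearlyCosymplectic where
  A : Type
  V : Type
  [ringA : CommRing A]
  [algA : Algebra ℝ A]
  [grpV : AddCommGroup V]
  [modV : Module A V]
  /-- directional derivative of functions along a vector field -/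
  D : V → A → A
  D_addl : ∀ X Y f, D (X + Y) f = D X f + D Y f
  D_smull : ∀ (f : A) (X : V) (h : A), D (f • X) h = f * D X h
  D_addr : ∀ (X : V) (f h : A), D X (f + h) = D X f + D X h
  D_mul : ∀ (X : V) (f h : A), D X (f * h) = D X f * h + f * D X h
  /-- Lie bracket of vector fields -/
  bracket : V → V → V
  bracket_D : ∀ X Y f, D (bracket X Y) f = D X (D Y f) - D Y (D X f)
  /-- the Riemannian metric -/
  g : V → V → A
  g_symm : ∀ X Y, g X Y = g Y X
  g_addl : ∀ X Y Z, g (X + Y) Z = g X Z + g Y Z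
  g_smull : ∀ (f : A) X Y, g (f • X) Y = f * g X Y
  /-- the Levi-Civita connection -/
  nabla : V → V → V
  nabla_addl : ∀ X Y Z, nabla (X + Y) Z = nabla X Z + nabla Y Z
  nabla_smull : ∀ (f : A) X Y, nabla (f • X) Y = f • nabla X Y
  nabla_addr : ∀ X Y Z, nabla X (Y + Z) = nabla X Y + nabla X Z
  nabla_leibniz : ∀ (X : V) (f : A) (Y : V),
    nabla X (f • Y) = D X f • Y + f • nabla X Y
  metric_compat : ∀ X Y Z, D X (g Y Z) = g (nabla X Y) Z + g Y (nabla X Z)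
  torsion_free : ∀ X Y, nabla X Y - nabla Y X = bracket X Y
  /-- the structure (1,1)-tensor θ -/
  θ : V → V
  θ_add : ∀ X Y, θ (X + Y) = θ X + θ Y
  θ_smul : ∀ (f : A) X, θ (f • X) = f • θ X
  /-- the characteristic vector field ξ -/
  ξ : V
  /-- ξ is a unit vector field (and η(ξ)=1, with η X = g X ξ) -/
  ξ_unit : g ξ ξ = 1
  /-- θ² = -Id + η ⊗ ξ -/
  θ_sq : ∀ X, θ (θ X) = -X + g X ξ • ξ
  /-- metric compatibility of the almost contact structure -/
  θ_compat : ∀ X Y, g (θ X) (θ Y) = g X Y - g X ξ * g Y ξ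
  /-- the nearly cosymplectic condition (∇_X θ)(Y) + (∇_Y θ)(X) = 0 -/
  nearly : ∀ X Y,
    (nabla X (θ Y) - θ (nabla X Y)) + (nabla Y (θ X) - θ (nabla Y X)) = 0

attribute [instance] NearlyCosymplectic.ringA NearlyCosymplectic.algA
  NearlyCosymplectic.grpV NearlyCosymplectic.modV

namespace NearlyCosymplectic

variable (M : NearlyCosymplectic)

/-- the covariant derivative (∇_X θ)(Y) -/
def nablaθ (X Y : M.V) : M.V := M.nabla X (M.θ Y) - M.θ (M.nabla X Y)

/-- the Riemann curvature operator R(X,Y)Z = [∇_X,∇_Y]Z - ∇_{[X,Y]}Z -/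
def R (X Y Z : M.V) : M.V :=
  M.nabla X (M.nabla Y Z) - M.nabla Y (M.nabla X Z) - M.nabla (M.bracket X Y) Z

/-- the second covariant derivative (∇²_{X,Y} θ)(Z) -/
def nabla2θ (X Y Z : M.V) : M.V :=
  M.nabla X (M.nablaθ Y Z) - M.nablaθ (M.nabla X Y) Z - M.nablaθ Y (M.nabla X Z)

end NearlyCosymplectic

/-! Write `F Y = (∇_Y θ) ξ`. Differentiating `θ² = -1 + η ⊗ ξ` along `ξ` and using the skew-symmetry
of `∇θ` together with `∇_ξ ξ = 0` gives `F (θ Y) + θ (F Y) = 0`. Classically `θ ξ = 0`, so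
`F Y = -θ ∇_Y ξ`, the identity reads `θ ∇_{θY} ξ = ∇_Y ξ`, and applying `θ` gives the claim.
In this model `g` may be degenerate and functions may be nilpotent, so only `c = g (θ ξ) ξ` with
`c² = 0` is available, and `∇_Y (θ ξ) = (Y c) ξ + c ∇_Y ξ`. Comparing the identity at `Y` and `θ Y`
gives `Y c = 0`, after which the remaining `c`-terms cancel because `c² = 0`. -/

theorem eq_zero_of_add_self_eq_zero {A W : Type*} [CommRing A] [Algebra ℝ A]
    [AddCommGroup W] [Module A W] {w : W} (h : w + w = 0) : w = 0 := by
  have two_unit : IsUnit (2 : A) := by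
    have h := (isUnit_iff_ne_zero.mpr (two_ne_zero : (2 : ℝ) ≠ 0)).map (algebraMap ℝ A)
    rwa [map_ofNat] at h
  exact two_unit.smul_eq_zero.mp (by rwa [two_smul])

namespace NearlyCosymplectic

variable (M : NearlyCosymplectic)

def θₗ : M.V →ₗ[M.A] M.V where
  toFun := M.θ
  map_add' := M.θ_add
  map_smul' := M.θ_smul

theorem θ_zero : M.θ 0 = 0 := map_zero M.θₗ

theorem θ_neg (X : M.V) : M.θ (-X) = -M.θ X := map_neg M.θₗ X

theorem θ_sub (X Y : M.V) : M.θ (X - Y) = M.θ X - M.θ Y := map_sub M.θₗ X Y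

def gLeft (Y : M.V) : M.V →ₗ[M.A] M.A where
  toFun X := M.g X Y
  map_add' X X' := M.g_addl X X' Y
  map_smul' f X := M.g_smull f X Y

theorem g_zero_left (Y : M.V) : M.g 0 Y = 0 := map_zero (M.gLeft Y)

theorem g_neg_left (X Y : M.V) : M.g (-X) Y = -M.g X Y := map_neg (M.gLeft Y) X

theorem g_sub_left (X X' Y : M.V) : M.g (X - X') Y = M.g X Y - M.g X' Y :=
  map_sub (M.gLeft Y) X X'

theorem nabla_zero_right (X : M.V) : M.nabla X 0 = 0 :=
  map_zero (AddMonoidHom.mk' (M.nabla X) (M.nabla_addr X))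

theorem nabla_neg_right (X Y : M.V) : M.nabla X (-Y) = -M.nabla X Y :=
  map_neg (AddMonoidHom.mk' (M.nabla X) (M.nabla_addr X)) Y

def nablaθLeft (Y : M.V) : M.V →ₗ[M.A] M.V where
  toFun X := M.nablaθ X Y
  map_add' X X' := by simp only [nablaθ, M.nabla_addl, M.θ_add]; abel
  map_smul' f X := by
    simp only [nablaθ, M.nabla_smull, M.θ_smul, smul_sub, RingHom.id_apply]

theorem D_one (X : M.V) : M.D X 1 = 0 := by
  simpa using M.D_mul X 1 1

theorem g_nabla_ξ_ξ (X : M.V) : M.g (M.nabla X M.ξ) M.ξ = 0 := by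
  have h := M.metric_compat X M.ξ M.ξ
  rw [M.ξ_unit, M.D_one, M.g_symm M.ξ] at h
  exact eq_zero_of_add_self_eq_zero (A := M.A) h.symm

theorem θ_θ_ξ : M.θ (M.θ M.ξ) = 0 := by
  rw [M.θ_sq, M.ξ_unit, one_smul, neg_add_cancel]

theorem g_θ_ξ_right (X : M.V) : M.g X (M.θ M.ξ) = M.g X M.ξ * M.g (M.θ M.ξ) M.ξ := by
  have h := M.θ_compat (M.θ X) M.ξ
  rw [M.ξ_unit, mul_one, sub_self, M.θ_sq, M.g_addl, M.g_neg_left, M.g_smull,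
    M.g_symm M.ξ] at h
  linear_combination -h

theorem g_θ_ξ_ξ_sq : M.g (M.θ M.ξ) M.ξ * M.g (M.θ M.ξ) M.ξ = 0 := by
  have h := M.θ_compat M.ξ M.ξ
  rw [M.ξ_unit, mul_one, sub_self, M.g_θ_ξ_right] at h
  exact h

theorem g_θ_left_ξ (Z : M.V) : M.g (M.θ Z) M.ξ = M.g Z M.ξ * M.g (M.θ M.ξ) M.ξ := by
  have θ_cube : M.g (M.θ Z) M.ξ • M.ξ = M.g Z M.ξ • M.θ M.ξ := by
    have h := M.θ_sq (M.θ Z)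
    rw [M.θ_sq Z, M.θ_add, M.θ_neg, M.θ_smul] at h
    linear_combination (norm := module) -h
  simpa [M.g_smull, M.ξ_unit] using congrArg (M.g · M.ξ) θ_cube

theorem nablaθ_θ_add_θ_nablaθ (X Y : M.V) :
    M.nablaθ X (M.θ Y) + M.θ (M.nablaθ X Y)
      = M.g Y (M.nabla X M.ξ) • M.ξ + M.g Y M.ξ • M.nabla X M.ξ := by
  rw [nablaθ, nablaθ, M.θ_sub, M.θ_sq, M.θ_sq, M.nabla_addr, M.nabla_neg_right,
    M.nabla_leibniz, M.metric_compat]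
  module

theorem nabla_θ_ξ (X : M.V) :
    M.nabla X (M.θ M.ξ)
      = M.D X (M.g (M.θ M.ξ) M.ξ) • M.ξ + M.g (M.θ M.ξ) M.ξ • M.nabla X M.ξ := by
  have key := M.nablaθ_θ_add_θ_nablaθ X (M.θ M.ξ)
  have g_θ_ξ_nabla : M.g (M.θ M.ξ) (M.nabla X M.ξ) = 0 := by
    rw [M.g_symm, M.g_θ_ξ_right, M.g_nabla_ξ_ξ, zero_mul]
  have g_nabla_θ_ξ : M.g (M.nabla X (M.θ M.ξ)) M.ξ = M.D X (M.g (M.θ M.ξ) M.ξ) := by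
    rw [M.metric_compat, g_θ_ξ_nabla, add_zero]
  rw [nablaθ, nablaθ, M.θ_θ_ξ, M.θ_zero, M.nabla_zero_right, M.θ_zero, zero_sub,
    zero_sub, M.θ_neg, M.θ_sq, g_nabla_θ_ξ, g_θ_ξ_nabla, zero_smul, zero_add] at key
  linear_combination (norm := module) key

theorem nablaθ_ξ (X : M.V) :
    M.nablaθ X M.ξ = M.D X (M.g (M.θ M.ξ) M.ξ) • M.ξ + M.g (M.θ M.ξ) M.ξ • M.nabla X M.ξ
      - M.θ (M.nabla X M.ξ) := by
  rw [nablaθ, nabla_θ_ξ]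

theorem nablaθ_comm (X Y : M.V) : M.nablaθ X Y = -M.nablaθ Y X :=
  eq_neg_of_add_eq_zero_left (M.nearly X Y)

theorem nablaθ_self (X : M.V) : M.nablaθ X X = 0 :=
  eq_zero_of_add_self_eq_zero (A := M.A) (M.nearly X X)

theorem eq_zero_of_θ_eq_smul_ξ_add {k : M.V} {s : M.A} (hk : M.g k M.ξ = 0)
    (h : M.θ k = s • M.ξ + M.g (M.θ M.ξ) M.ξ • k) : k = 0 := by
  have hs : s = 0 := by
    have h' := congrArg (M.g · M.ξ) h
    rw [M.g_θ_left_ξ] at h'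
    simp only [M.g_addl, M.g_smull, M.ξ_unit, hk] at h'
    linear_combination -h'
  subst hs
  have θθk := congrArg M.θ h
  rw [M.θ_sq, M.θ_add, M.θ_smul, M.θ_smul, h] at θθk
  linear_combination (norm := module) -θθk + hk • M.ξ - M.g_θ_ξ_ξ_sq • k

theorem nabla_ξ_ξ : M.nabla M.ξ M.ξ = 0 := by
  refine M.eq_zero_of_θ_eq_smul_ξ_add (s := M.D M.ξ (M.g (M.θ M.ξ) M.ξ)) (M.g_nabla_ξ_ξ M.ξ) ?_
  have h := M.nablaθ_ξ M.ξ
  rw [M.nablaθ_self] at h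
  linear_combination (norm := module) h

theorem nablaθ_θ_ξ_add_θ_nablaθ_ξ (Y : M.V) :
    M.nablaθ (M.θ Y) M.ξ + M.θ (M.nablaθ Y M.ξ) = 0 := by
  have key := M.nablaθ_θ_add_θ_nablaθ M.ξ Y
  rw [M.nabla_ξ_ξ, M.g_symm, M.g_zero_left, zero_smul, smul_zero, add_zero,
    M.nablaθ_comm M.ξ, M.nablaθ_comm M.ξ, M.θ_neg] at key
  linear_combination (norm := module) -key

theorem D_g_θ_ξ_ξ (Y : M.V) : M.D Y (M.g (M.θ M.ξ) M.ξ) = 0 := by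
  have g_nablaθ_ξ : M.g (M.nablaθ Y M.ξ) M.ξ = M.D Y (M.g (M.θ M.ξ) M.ξ) := by
    rw [M.nablaθ_ξ, M.g_sub_left, M.g_θ_left_ξ (M.nabla Y M.ξ), M.g_addl, M.g_smull,
      M.g_smull, M.ξ_unit, M.g_nabla_ξ_ξ]
    ring
  have nablaθ_θ_θ : M.nablaθ (M.θ (M.θ Y)) M.ξ = -M.nablaθ Y M.ξ := by
    change M.nablaθLeft M.ξ (M.θ (M.θ Y)) = -M.nablaθLeft M.ξ Y
    rw [M.θ_sq, map_add, map_neg, map_smul,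
      show M.nablaθLeft M.ξ M.ξ = 0 from M.nablaθ_self M.ξ, smul_zero, add_zero]
  have hθY := M.nablaθ_θ_ξ_add_θ_nablaθ_ξ (M.θ Y)
  have hY := congrArg M.θ (M.nablaθ_θ_ξ_add_θ_nablaθ_ξ Y)
  rw [nablaθ_θ_θ] at hθY
  rw [M.θ_add, M.θ_sq (M.nablaθ Y M.ξ), g_nablaθ_ξ, M.θ_zero] at hY
  have h : M.D Y (M.g (M.θ M.ξ) M.ξ) • M.ξ = 0 := by
    linear_combination (norm := module) hY - hθY
  simpa only [M.g_smull, M.ξ_unit, mul_one, M.g_zero_left] using congrArg (M.g · M.ξ) h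

theorem θ_eq_neg_of_θ_eq {a b : M.V} {c : M.A} (hc : c * c = 0) (ha : M.g a M.ξ = 0)
    (hb : M.g b M.ξ = 0) (h : M.θ b = a + c • (b + M.θ a)) : M.θ a = -b := by
  have θh := congrArg M.θ h
  rw [M.θ_sq, M.θ_add, M.θ_smul, M.θ_add, M.θ_sq, h] at θh
  linear_combination (norm := module) -θh + hb • M.ξ - hc • (b + M.θ a) - (c * ha) • M.ξ

end NearlyCosymplectic

open NearlyCosymplectic

/-- θ(∇_X ξ) = -∇_{θX} ξ. -/
theorem stmt2 (M : NearlyCosymplectic) (X : M.V) :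
    M.θ (M.nabla X M.ξ) = -(M.nabla (M.θ X) M.ξ) := by
  have key := M.nablaθ_θ_ξ_add_θ_nablaθ_ξ X
  rw [M.nablaθ_ξ, M.nablaθ_ξ, M.D_g_θ_ξ_ξ, M.D_g_θ_ξ_ξ, M.θ_sub, M.θ_add, M.θ_smul,
    M.θ_smul, M.θ_sq, M.g_nabla_ξ_ξ] at key
  refine M.θ_eq_neg_of_θ_eq M.g_θ_ξ_ξ_sq (M.g_nabla_ξ_ξ X) (M.g_nabla_ξ_ξ (M.θ X)) ?_
  linear_combination (norm := module) -key
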